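/- Let F and Θ_j for every j ∈ J be strictly convex, and let S be convex. Suppose that for every x ∈ S the sets P_F(x; Ω_i) and Π_F(x; Θ_j) are nonempty for all i ∈ I and j ∈ J. Then the set of minimizers of G over S has at most one element if and only if one of the following holds: (1) I = ∅ and ⋂_{j∈J} (Θ_j ∩ S) contains at most one point; (2) I ≠ ∅. -/
import Mathlib


open Set Pointwise Filter Topology Bornology Function

variable {X : Type*} [NormedAddCommGroup X] [NormedSpace ℝ X]

/-- The Minkowski gauge of `F`: `ρ_F(x) = inf {t ≥ 0 : x ∈ t • F}`. -/
noncomputable def rhoF (F : Set X) (x : X) : ℝ :=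
  sInf {t : ℝ | 0 ≤ t ∧ x ∈ t • F}

/-- The maximal time function `C_F(x; Q) = sup {ρ_F(q - x) : q ∈ Q}`. -/
noncomputable def maxTime (F Q : Set X) (x : X) : ℝ :=
  sSup ((fun q => rhoF F (q - x)) '' Q)

/-- The minimal time function `T_F(x; Θ) = inf {ρ_F(q - x) : q ∈ Θ}`. -/
noncomputable def minTime (F Θ : Set X) (x : X) : ℝ :=
  sInf ((fun q => rhoF F (q - x)) '' Θ)

/-- `G(x) = max {C_F(x; Ω_i), T_F(x; Θ_j) : i ∈ I, j ∈ J}`. -/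
noncomputable def GFun {ι κ : Type*} (F : Set X) (I : Finset ι) (J : Finset κ)
    (Ω : ι → Set X) (Θ : κ → Set X) (x : X) : ℝ :=
  sSup ((fun i => maxTime F (Ω i) x) '' ↑I ∪ (fun j => minTime F (Θ j) x) '' ↑J)

/-- `H(x) = Σ_{i∈I} C_F(x; Ω_i) + Σ_{j∈J} T_F(x; Θ_j)`. -/
noncomputable def HFun {ι κ : Type*} (F : Set X) (I : Finset ι) (J : Finset κ)
    (Ω : ι → Set X) (Θ : κ → Set X) (x : X) : ℝ :=
  ∑ i ∈ I, maxTime F (Ω i) x + ∑ j ∈ J, minTime F (Θ j) x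

/-- The farthest projection `P_F(x; Ω) = {ω ∈ Ω : ρ_F(ω - x) = C_F(x; Ω)}`. -/
def farProj (F Ω : Set X) (x : X) : Set X :=
  {ω ∈ Ω | rhoF F (ω - x) = maxTime F Ω x}

/-- The projection `Π_F(x; Θ) = {u ∈ Θ : ρ_F(u - x) = T_F(x; Θ)}`. -/
def nearProj (F Θ : Set X) (x : X) : Set X :=
  {u ∈ Θ | rhoF F (u - x) = minTime F Θ x}

section AuxLemmas

variable {F : Set X}

lemma rhoF_eq_gauge (h0 : (0:X) ∈ F) (x : X) : rhoF F x = gauge F x := by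
  rcases eq_or_ne x 0 with rfl | hx
  · have hmem : (0:ℝ) ∈ {t : ℝ | 0 ≤ t ∧ (0:X) ∈ t • F} :=
      ⟨le_refl 0, by simpa using Set.smul_mem_smul_set (a := (0:ℝ)) h0⟩
    rw [gauge_zero, rhoF]
    exact le_antisymm (csInf_le ⟨0, fun t ht => ht.1⟩ hmem)
      (le_csInf ⟨0, hmem⟩ fun t ht => ht.1)
  · unfold rhoF gauge
    congr 1
    ext t
    simp only [Set.mem_setOf_eq]
    constructor
    · rintro ⟨ht, hmem⟩
      rcases ht.lt_or_eq with h | h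
      · exact ⟨h, hmem⟩
      · exfalso
        rw [← h, zero_smul_set ⟨0, h0⟩] at hmem
        exact hx (by simpa using hmem)
    · rintro ⟨ht, hmem⟩; exact ⟨ht.le, hmem⟩

lemma rhoF_nonneg (F : Set X) (x : X) : 0 ≤ rhoF F x :=
  Real.sInf_nonneg fun _ ht => ht.1

lemma rhoF_zero (hF0 : (0:X) ∈ interior F) : rhoF F 0 = 0 := by
  rw [rhoF_eq_gauge (interior_subset hF0), gauge_zero]

lemma rhoF_add_le (hFconv : Convex ℝ F) (hF0 : (0:X) ∈ interior F) (x y : X) :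
    rhoF F (x + y) ≤ rhoF F x + rhoF F y := by
  simp only [rhoF_eq_gauge (interior_subset hF0)]
  exact gauge_add_le hFconv (absorbent_nhds_zero (mem_interior_iff_mem_nhds.mp hF0)) x y

lemma rhoF_smul (hF0 : (0:X) ∈ interior F) {c : ℝ} (hc : 0 ≤ c) (x : X) :
    rhoF F (c • x) = c * rhoF F x := by
  simp only [rhoF_eq_gauge (interior_subset hF0)]
  exact gauge_smul_of_nonneg hc x

lemma rhoF_eq_zero_iff (hF0 : (0:X) ∈ interior F) (hFb : IsBounded F) {x : X} :
    rhoF F x = 0 ↔ x = 0 := by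
  rw [rhoF_eq_gauge (interior_subset hF0)]
  exact gauge_eq_zero (absorbent_nhds_zero (mem_interior_iff_mem_nhds.mp hF0))
    (NormedSpace.isVonNBounded_of_isBounded _ hFb)

lemma mem_of_rhoF_le_one (hFc : IsClosed F) (hFconv : Convex ℝ F)
    (hF0 : (0:X) ∈ interior F) {x : X} (h : rhoF F x ≤ 1) : x ∈ F := by
  rw [rhoF_eq_gauge (interior_subset hF0)] at h
  have := (gauge_le_one_iff_mem_closure hFconv (mem_interior_iff_mem_nhds.mp hF0)).mp h
  rwa [hFc.closure_eq] at this

lemma rhoF_lt_one_of_mem_interior (hF0 : (0:X) ∈ interior F) {x : X}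
    (h : x ∈ interior F) : rhoF F x < 1 := by
  rw [rhoF_eq_gauge (interior_subset hF0)]
  exact interior_subset_gauge_lt_one F h

lemma exists_norm_le_rhoF (hF0 : (0:X) ∈ interior F) (hFb : IsBounded F) :
    ∃ R > 0, ∀ x : X, ‖x‖ ≤ R * rhoF F x := by
  obtain ⟨R, hR0, hR⟩ := hFb.subset_closedBall_lt 0 0
  refine ⟨R, hR0, fun x => ?_⟩
  have h := le_gauge_of_subset_closedBall
    (absorbent_nhds_zero (mem_interior_iff_mem_nhds.mp hF0)) hR0.le hR (x := x)
  rw [← rhoF_eq_gauge (interior_subset hF0), div_le_iff₀ hR0] at h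
  linarith

lemma exists_rhoF_le_norm (hF0 : (0:X) ∈ interior F) :
    ∃ r > 0, ∀ x : X, rhoF F x ≤ ‖x‖ / r := by
  obtain ⟨r, hr0, hr⟩ := Metric.mem_nhds_iff.mp (mem_interior_iff_mem_nhds.mp hF0)
  refine ⟨r, hr0, fun x => ?_⟩
  have h := mul_gauge_le_norm (s := F) (x := x) hr
  rw [← rhoF_eq_gauge (interior_subset hF0)] at h
  rw [le_div_iff₀ hr0]
  linarith

/-- The key strict-convexity lemma. -/
lemma strict_key (hFc : IsClosed F) (hFconv : Convex ℝ F) (hF0 : (0:X) ∈ interior F)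
    (hFs : StrictConvex ℝ F) {a b : X} {v : ℝ} (hv : 0 < v)
    (ha : rhoF F a = v) (hb : rhoF F b = v) (hsum : 2 * v ≤ rhoF F (a + b)) : a = b := by
  by_contra hab
  have hva : rhoF F (v⁻¹ • a) ≤ 1 := by
    rw [rhoF_smul hF0 (inv_nonneg.mpr hv.le), ha, inv_mul_cancel₀ hv.ne']
  have hvb : rhoF F (v⁻¹ • b) ≤ 1 := by
    rw [rhoF_smul hF0 (inv_nonneg.mpr hv.le), hb, inv_mul_cancel₀ hv.ne']
  have ha' : v⁻¹ • a ∈ F := mem_of_rhoF_le_one hFc hFconv hF0 hva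
  have hb' : v⁻¹ • b ∈ F := mem_of_rhoF_le_one hFc hFconv hF0 hvb
  have hne : v⁻¹ • a ≠ v⁻¹ • b := fun h =>
    hab (smul_right_injective X (inv_ne_zero hv.ne') h)
  have hmid := hFs ha' hb' hne (by norm_num : (0:ℝ) < 2⁻¹) (by norm_num : (0:ℝ) < 2⁻¹)
    (by norm_num)
  have heq : (2⁻¹:ℝ) • (v⁻¹ • a) + (2⁻¹:ℝ) • (v⁻¹ • b) = (2*v)⁻¹ • (a+b) := by
    rw [smul_smul, smul_smul, smul_add, mul_inv]
  rw [heq] at hmid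
  have hlt : rhoF F ((2*v)⁻¹ • (a+b)) < 1 := rhoF_lt_one_of_mem_interior hF0 hmid
  rw [rhoF_smul hF0 (by positivity)] at hlt
  have h2 : rhoF F (a+b) ≤ 2*v := by
    have := rhoF_add_le hFconv hF0 a b
    rw [ha, hb] at this
    linarith
  have h3 : rhoF F (a+b) = 2*v := le_antisymm h2 hsum
  rw [h3, inv_mul_cancel₀ (by positivity)] at hlt
  exact lt_irrefl 1 hlt

lemma minTime_nonneg (F Θ : Set X) (x : X) : 0 ≤ minTime F Θ x :=
  Real.sInf_nonneg (by rintro t ⟨u, _, rfl⟩; exact rhoF_nonneg F _)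

lemma minTime_le {Θ : Set X} {u : X} (hu : u ∈ Θ) (F : Set X) (x : X) :
    minTime F Θ x ≤ rhoF F (u - x) :=
  csInf_le ⟨0, by rintro t ⟨w, _, rfl⟩; exact rhoF_nonneg F _⟩ ⟨u, hu, rfl⟩

lemma minTime_eq_zero_of_mem (hF0 : (0:X) ∈ interior F) {Θ : Set X} {x : X}
    (hx : x ∈ Θ) : minTime F Θ x = 0 :=
  le_antisymm (by simpa [sub_self, rhoF_zero hF0] using minTime_le hx F x)
    (minTime_nonneg F Θ x)

lemma mem_of_minTime_eq_zero (hF0 : (0:X) ∈ interior F) (hFb : IsBounded F)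
    {Θ : Set X} (hΘc : IsClosed Θ) (hΘne : Θ.Nonempty) {x : X}
    (h : minTime F Θ x = 0) : x ∈ Θ := by
  obtain ⟨R, hR0, hR⟩ := exists_norm_le_rhoF hF0 hFb
  rw [← hΘc.closure_eq, Metric.mem_closure_iff]
  intro ε hε
  have hne : ((fun q => rhoF F (q - x)) '' Θ).Nonempty := hΘne.image _
  have hlt : sInf ((fun q => rhoF F (q - x)) '' Θ) < ε / R := by
    rw [show sInf ((fun q => rhoF F (q - x)) '' Θ) = minTime F Θ x from rfl, h]
    positivity
  obtain ⟨t, ⟨u, hu, rfl⟩, ht⟩ := exists_lt_of_csInf_lt hne hlt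
  refine ⟨u, hu, ?_⟩
  rw [dist_comm, dist_eq_norm]
  calc ‖u - x‖ ≤ R * rhoF F (u - x) := hR _
    _ < R * (ε/R) := mul_lt_mul_of_pos_left ht hR0
    _ = ε := by field_simp

lemma bddAbove_rho_image (hF0 : (0:X) ∈ interior F) {Ω : Set X} (hΩb : IsBounded Ω)
    (x : X) : BddAbove ((fun q => rhoF F (q - x)) '' Ω) := by
  obtain ⟨r, hr0, hr⟩ := exists_rhoF_le_norm hF0
  obtain ⟨R, hR⟩ := hΩb.subset_closedBall 0
  refine ⟨(R + ‖x‖) / r, ?_⟩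
  rintro t ⟨q, hq, rfl⟩
  have hqR : ‖q‖ ≤ R := by simpa using hR hq
  calc rhoF F (q - x) ≤ ‖q - x‖ / r := hr _
    _ ≤ (R + ‖x‖) / r := by
        gcongr
        calc ‖q - x‖ ≤ ‖q‖ + ‖x‖ := norm_sub_le q x
          _ ≤ R + ‖x‖ := by linarith

lemma le_maxTime (hF0 : (0:X) ∈ interior F) {Ω : Set X} (hΩb : IsBounded Ω)
    {q : X} (hq : q ∈ Ω) (x : X) : rhoF F (q - x) ≤ maxTime F Ω x :=
  le_csSup (bddAbove_rho_image hF0 hΩb x) ⟨q, hq, rfl⟩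

lemma maxTime_nonneg (hF0 : (0:X) ∈ interior F) {Ω : Set X} (hΩb : IsBounded Ω)
    (hΩne : Ω.Nonempty) (x : X) : 0 ≤ maxTime F Ω x := by
  obtain ⟨q, hq⟩ := hΩne
  exact (rhoF_nonneg F _).trans (le_maxTime hF0 hΩb hq x)

end AuxLemmas

/-- Theorem 3.5. -/
theorem stmt10
    {ι κ : Type*} (F : Set X) (I : Finset ι) (J : Finset κ)
    (Ω : ι → Set X) (Θ : κ → Set X) (S : Set X)
    (hFc : IsClosed F) (hFb : IsBounded F) (hFconv : Convex ℝ F)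
    (hF0 : (0 : X) ∈ interior F)
    (hΩne : ∀ i ∈ I, (Ω i).Nonempty) (hΩc : ∀ i ∈ I, IsClosed (Ω i))
    (hΩb : ∀ i ∈ I, IsBounded (Ω i))
    (hΘne : ∀ j ∈ J, (Θ j).Nonempty) (hΘc : ∀ j ∈ J, IsClosed (Θ j))
    (hSne : S.Nonempty) (hSc : IsClosed S)
    (hIJ : I.Nonempty ∨ J.Nonempty)
    (hFs : StrictConvex ℝ F) (hΘs : ∀ j ∈ J, StrictConvex ℝ (Θ j))
    (hSconv : Convex ℝ S)
    (hP : ∀ x ∈ S, ∀ i ∈ I, (farProj F (Ω i) x).Nonempty)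
    (hPi : ∀ x ∈ S, ∀ j ∈ J, (nearProj F (Θ j) x).Nonempty) :
    {x ∈ S | ∀ y ∈ S, GFun F I J Ω Θ x ≤ GFun F I J Ω Θ y}.Subsingleton ↔
      ((I = ∅ ∧ (⋂ j ∈ J, (Θ j ∩ S)).Subsingleton) ∨ I.Nonempty) := by
  classical
  -- abbreviation for the set whose sSup is GFun
  set A : X → Set ℝ := fun z =>
    ((fun i => maxTime F (Ω i) z) '' ↑I ∪ (fun j => minTime F (Θ j) z) '' ↑J) with hA
  have hGdef : ∀ z : X, GFun F I J Ω Θ z = sSup (A z) := fun z => rfl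
  have hAfin : ∀ z : X, (A z).Finite :=
    fun z => (I.finite_toSet.image _).union (J.finite_toSet.image _)
  have hAne : ∀ z : X, (A z).Nonempty := by
    intro z
    rcases hIJ with ⟨i, hi⟩ | ⟨j, hj⟩
    · exact ⟨maxTime F (Ω i) z, Or.inl ⟨i, hi, rfl⟩⟩
    · exact ⟨minTime F (Θ j) z, Or.inr ⟨j, hj, rfl⟩⟩
  have hmaxle : ∀ z : X, ∀ i ∈ I, maxTime F (Ω i) z ≤ GFun F I J Ω Θ z :=
    fun z i hi => le_csSup ((hAfin z).bddAbove) (Or.inl ⟨i, hi, rfl⟩)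
  have hminle : ∀ z : X, ∀ j ∈ J, minTime F (Θ j) z ≤ GFun F I J Ω Θ z :=
    fun z j hj => le_csSup ((hAfin z).bddAbove) (Or.inr ⟨j, hj, rfl⟩)
  have hG_nonneg : ∀ z : X, 0 ≤ GFun F I J Ω Θ z := by
    intro z
    rcases hIJ with ⟨i, hi⟩ | ⟨j, hj⟩
    · exact (maxTime_nonneg hF0 (hΩb i hi) (hΩne i hi) z).trans (hmaxle z i hi)
    · exact (minTime_nonneg F _ z).trans (hminle z j hj)
  have hG_le : ∀ z : X, ∀ c : ℝ, 0 ≤ c → (∀ i ∈ I, maxTime F (Ω i) z ≤ c) →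
      (∀ j ∈ J, minTime F (Θ j) z ≤ c) → GFun F I J Ω Θ z ≤ c := by
    intro z c hc h1 h2
    rw [hGdef]
    refine Real.sSup_le ?_ hc
    rintro t (⟨i, hi, rfl⟩ | ⟨j, hj, rfl⟩)
    · exact h1 i hi
    · exact h2 j hj
  constructor
  · -- forward direction
    intro hsub
    rcases I.eq_empty_or_nonempty with hIe | hI
    · left
      refine ⟨hIe, ?_⟩
      have hJ : J.Nonempty := by
        rcases hIJ with hI' | hJ
        · rw [hIe] at hI'; exact absurd hI' (by simp)
        · exact hJ
      obtain ⟨j0, hj0⟩ := hJ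
      intro a ha b hb
      have hmemM : ∀ c : X, c ∈ ⋂ j ∈ J, (Θ j ∩ S) →
          c ∈ {x ∈ S | ∀ y ∈ S, GFun F I J Ω Θ x ≤ GFun F I J Ω Θ y} := by
        intro c hc
        simp only [Set.mem_iInter] at hc
        refine ⟨(hc j0 hj0).2, fun z hz => ?_⟩
        have hGa : GFun F I J Ω Θ c ≤ 0 :=
          hG_le c 0 le_rfl (fun i hi => by simp [hIe] at hi)
            (fun j hj => le_of_eq (minTime_eq_zero_of_mem hF0 (hc j hj).1))
        exact hGa.trans (hG_nonneg z)
      exact hsub (hmemM a ha) (hmemM b hb)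
    · exact Or.inr hI
  · -- reverse direction
    intro hRHS x hx y hy
    obtain ⟨hxS, hxmin⟩ := hx
    obtain ⟨hyS, hymin⟩ := hy
    have hGy : GFun F I J Ω Θ y = GFun F I J Ω Θ x :=
      le_antisymm (hymin x hxS) (hxmin y hyS)
    set v : ℝ := GFun F I J Ω Θ x with hv
    have hv0 : 0 ≤ v := hG_nonneg x
    by_cases hveq : v = 0
    · -- minimum value is zero
      rcases hRHS with ⟨hIe, hsub⟩ | hI
      · have hmem : ∀ z : X, z ∈ S → GFun F I J Ω Θ z = 0 →
            z ∈ ⋂ j ∈ J, (Θ j ∩ S) := by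
          intro z hz hGz
          simp only [Set.mem_iInter]
          intro j hj
          refine ⟨?_, hz⟩
          apply mem_of_minTime_eq_zero hF0 hFb (hΘc j hj) (hΘne j hj)
          exact le_antisymm (hGz ▸ hminle z j hj) (minTime_nonneg F _ z)
        exact hsub (hmem x hxS hveq) (hmem y hyS (hGy.trans hveq))
      · obtain ⟨i0, hi0⟩ := hI
        obtain ⟨q, hq⟩ := hΩne i0 hi0
        have hqx : q = x := by
          have h1 : rhoF F (q - x) ≤ 0 :=
            (le_maxTime hF0 (hΩb i0 hi0) hq x).trans ((hmaxle x i0 hi0).trans hveq.le)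
          have := (rhoF_eq_zero_iff hF0 hFb).mp
            (le_antisymm h1 (rhoF_nonneg F _))
          exact sub_eq_zero.mp this
        have hqy : q = y := by
          have h1 : rhoF F (q - y) ≤ 0 :=
            (le_maxTime hF0 (hΩb i0 hi0) hq y).trans
              ((hmaxle y i0 hi0).trans (hGy.trans hveq).le)
          have := (rhoF_eq_zero_iff hF0 hFb).mp
            (le_antisymm h1 (rhoF_nonneg F _))
          exact sub_eq_zero.mp this
        rw [← hqx, ← hqy]
    · have hvpos : 0 < v := lt_of_le_of_ne hv0 (Ne.symm hveq)
      set m : X := (2:ℝ)⁻¹ • (x + y) with hm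
      have hmS : m ∈ S := by
        have h := hSconv hxS hyS (by norm_num : (0:ℝ) ≤ 2⁻¹)
          (by norm_num : (0:ℝ) ≤ 2⁻¹) (by norm_num)
        simpa [hm, smul_add] using h
      have hmax_m : ∀ i ∈ I, maxTime F (Ω i) m ≤ v := by
        intro i hi
        obtain ⟨ω, hωΩ, hωeq⟩ := hP m hmS i hi
        have hsplit : ω - m = (2:ℝ)⁻¹ • ((ω - x) + (ω - y)) := by
          rw [hm]; module
        have h2 : rhoF F (ω - x) ≤ v := (le_maxTime hF0 (hΩb i hi) hωΩ x).trans
          (hmaxle x i hi)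
        have h3 : rhoF F (ω - y) ≤ v := (le_maxTime hF0 (hΩb i hi) hωΩ y).trans
          ((hmaxle y i hi).trans hGy.le)
        have h1 : rhoF F ((ω - x) + (ω - y)) ≤ rhoF F (ω - x) + rhoF F (ω - y) :=
          rhoF_add_le hFconv hF0 _ _
        have key : rhoF F (ω - m) ≤ v := by
          rw [hsplit, rhoF_smul hF0 (by norm_num : (0:ℝ) ≤ 2⁻¹)]
          linarith
        exact hωeq ▸ key
      have hmin_m : ∀ j ∈ J, minTime F (Θ j) m ≤ v := by
        intro j hj
        obtain ⟨u, huΘ, hueq⟩ := hPi x hxS j hj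
        obtain ⟨w, hwΘ, hweq⟩ := hPi y hyS j hj
        have hp : (2:ℝ)⁻¹ • (u + w) ∈ Θ j := by
          have h := (hΘs j hj).convex huΘ hwΘ (by norm_num : (0:ℝ) ≤ 2⁻¹)
            (by norm_num : (0:ℝ) ≤ 2⁻¹) (by norm_num)
          simpa [smul_add] using h
        have hsplit : (2:ℝ)⁻¹ • (u + w) - m = (2:ℝ)⁻¹ • ((u - x) + (w - y)) := by
          rw [hm]; module
        have h2 : rhoF F (u - x) ≤ v := hueq.le.trans (hminle x j hj)
        have h3 : rhoF F (w - y) ≤ v := hweq.le.trans ((hminle y j hj).trans hGy.le)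
        have h1 : rhoF F ((u - x) + (w - y)) ≤ rhoF F (u - x) + rhoF F (w - y) :=
          rhoF_add_le hFconv hF0 _ _
        calc minTime F (Θ j) m ≤ rhoF F ((2:ℝ)⁻¹ • (u + w) - m) := minTime_le hp F m
          _ ≤ v := by
              rw [hsplit, rhoF_smul hF0 (by norm_num : (0:ℝ) ≤ 2⁻¹)]
              linarith
      have hGm : GFun F I J Ω Θ m = v :=
        le_antisymm (hG_le m v hv0 hmax_m hmin_m) (hxmin m hmS)
      have hmem : GFun F I J Ω Θ m ∈ A m := by
        rw [hGdef]
        exact (hAne m).csSup_mem (hAfin m)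
      rw [hGm] at hmem
      rcases hmem with ⟨i, hi, hieq⟩ | ⟨j, hj, hjeq⟩
      · -- max term achieves the value
        obtain ⟨ω, hωΩ, hωeq⟩ := hP m hmS i hi
        have hρm : rhoF F (ω - m) = v := hωeq.trans hieq
        have h2 : rhoF F (ω - x) ≤ v := (le_maxTime hF0 (hΩb i hi) hωΩ x).trans
          (hmaxle x i hi)
        have h3 : rhoF F (ω - y) ≤ v := (le_maxTime hF0 (hΩb i hi) hωΩ y).trans
          ((hmaxle y i hi).trans hGy.le)
        have hsplit : (ω - x) + (ω - y) = (2:ℝ) • (ω - m) := by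
          rw [hm]; module
        have hsum : 2 * v ≤ rhoF F ((ω - x) + (ω - y)) := by
          rw [hsplit, rhoF_smul hF0 (by norm_num : (0:ℝ) ≤ 2), hρm]
        have hadd : rhoF F ((ω - x) + (ω - y)) ≤ rhoF F (ω - x) + rhoF F (ω - y) :=
          rhoF_add_le hFconv hF0 _ _
        have h2' : rhoF F (ω - x) = v := by linarith
        have h3' : rhoF F (ω - y) = v := by linarith
        have heq := strict_key hFc hFconv hF0 hFs hvpos h2' h3' hsum
        exact sub_right_injective heq
      · -- min term achieves the value
        obtain ⟨u, huΘ, hueq⟩ := hPi x hxS j hj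
        obtain ⟨w, hwΘ, hweq⟩ := hPi y hyS j hj
        have hp : (2:ℝ)⁻¹ • (u + w) ∈ Θ j := by
          have h := (hΘs j hj).convex huΘ hwΘ (by norm_num : (0:ℝ) ≤ 2⁻¹)
            (by norm_num : (0:ℝ) ≤ 2⁻¹) (by norm_num)
          simpa [smul_add] using h
        have h2 : rhoF F (u - x) ≤ v := hueq.le.trans (hminle x j hj)
        have h3 : rhoF F (w - y) ≤ v := hweq.le.trans ((hminle y j hj).trans hGy.le)
        have hsplit : (2:ℝ)⁻¹ • (u + w) - m = (2:ℝ)⁻¹ • ((u - x) + (w - y)) := by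
          rw [hm]; module
        have hadd : rhoF F ((u - x) + (w - y)) ≤ rhoF F (u - x) + rhoF F (w - y) :=
          rhoF_add_le hFconv hF0 _ _
        have hge : v ≤ rhoF F ((2:ℝ)⁻¹ • (u + w) - m) := hjeq ▸ minTime_le hp F m
        have hple : rhoF F ((2:ℝ)⁻¹ • (u + w) - m) =
            2⁻¹ * rhoF F ((u - x) + (w - y)) := by
          rw [hsplit, rhoF_smul hF0 (by norm_num : (0:ℝ) ≤ 2⁻¹)]
        have h2' : rhoF F (u - x) = v := by
          rw [hple] at hge; linarith
        have h3' : rhoF F (w - y) = v := by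
          rw [hple] at hge; linarith
        have hpm : rhoF F ((2:ℝ)⁻¹ • (u + w) - m) = v := by
          rw [hple]; rw [hple] at hge; linarith
        have hsum : 2 * v ≤ rhoF F ((u - x) + (w - y)) := by
          rw [hple] at hpm; linarith
        have heq := strict_key hFc hFconv hF0 hFs hvpos h2' h3' hsum
        by_cases huw : u = w
        · rw [huw] at heq
          exact sub_right_injective heq
        · exfalso
          have hpint : (2:ℝ)⁻¹ • (u + w) ∈ interior (Θ j) := by
            have h := hΘs j hj huΘ hwΘ huw (by norm_num : (0:ℝ) < 2⁻¹)
              (by norm_num : (0:ℝ) < 2⁻¹) (by norm_num)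
            simpa [smul_add] using h
          set p : X := (2:ℝ)⁻¹ • (u + w) with hpdef
          obtain ⟨δ, hδ0, hδ⟩ := Metric.isOpen_iff.mp isOpen_interior p hpint
          have hmp : p - m ≠ 0 := by
            intro h0
            rw [sub_eq_zero] at h0
            rw [show p - m = (0:X) by rw [h0, sub_self], rhoF_zero hF0] at hpm
            exact hveq hpm.symm
          have hnorm : 0 < ‖p - m‖ := norm_pos_iff.mpr hmp
          set t : ℝ := min 2⁻¹ (δ / (2 * ‖p - m‖)) with htdef
          have ht0 : 0 < t := lt_min (by norm_num) (by positivity)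
          have ht1 : t ≤ 2⁻¹ := min_le_left _ _
          set q : X := p + t • (m - p) with hqdef
          have hq_p : q - p = t • (m - p) := by rw [hqdef]; abel
          have hqΘ : q ∈ Θ j := by
            apply interior_subset
            apply hδ
            rw [Metric.mem_ball, dist_eq_norm, hq_p, norm_smul,
              Real.norm_eq_abs, abs_of_pos ht0, norm_sub_rev]
            calc t * ‖p - m‖ ≤ (δ / (2 * ‖p - m‖)) * ‖p - m‖ := by
                  exact mul_le_mul_of_nonneg_right (min_le_right _ _) hnorm.le
              _ = δ / 2 := by field_simp
              _ < δ := by linarith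
          have hqm : q - m = (1 - t) • (p - m) := by rw [hqdef]; module
          have hρq : rhoF F (q - m) = (1 - t) * v := by
            rw [hqm, rhoF_smul hF0 (by linarith : (0:ℝ) ≤ 1 - t), hpm]
          have hge2 : v ≤ rhoF F (q - m) := hjeq ▸ minTime_le hqΘ F m
          rw [hρq] at hge2
          nlinarith
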